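/- Let p be a prime number with p ≡ 1 (mod 3). Then there exist positive integers x and y such that p = x² + 3y². -/

import Mathlib

/-!
Since `3 ∣ p - 1`, the group `(ZMod p)ˣ` contains a primitive cube root of unity `ω`, and
`k = 2ω + 1` is a square root of `-3` modulo `p`. Thue's pigeonhole argument gives `(X, Y) ≠ 0` with
`|X|, |Y| ≤ √p` and `X ≡ kY`, so `X² + 3Y² = mp` with `0 < m < 4`. The case `m = 2` is impossible
modulo 3, and if `m = 3` then `3 ∣ X` and `p = Y² + 3(X/3)²`. Neither coordinate of the resulting
representation vanishes, since `p` is neither a square nor a multiple of 3.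
-/
theorem IsPrimitiveRoot.two_mul_add_one_sq {R : Type*} [CommRing R] [IsDomain R] {ω : R}
    (hω : IsPrimitiveRoot ω 3) : (2 * ω + 1) ^ 2 = -3 := by
  have h := hω.geom_sum_eq_zero (by norm_num)
  simp only [Finset.sum_range_succ, Finset.sum_range_zero, pow_zero, pow_one, zero_add] at h
  linear_combination 4 * h

theorem ZMod.exists_sq_eq_neg_three_of_mod_three_eq_one {p : ℕ} [Fact p.Prime] (hp : p % 3 = 1) :
    ∃ k : ZMod p, k ^ 2 = -3 := by
  have h3 : 3 ∣ Fintype.card (ZMod p)ˣ := by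
    rw [ZMod.card_units_eq_totient, Nat.totient_prime Fact.out]
    omega
  obtain ⟨g, hg⟩ := exists_prime_orderOf_dvd_card 3 h3
  exact ⟨_, (IsPrimitiveRoot.coe_units_iff.mpr (IsPrimitiveRoot.iff_orderOf.mpr hg)).two_mul_add_one_sq⟩

theorem ZMod.exists_abs_le_sqrt_intCast_eq_mul (n : ℕ) [NeZero n] (k : ZMod n) :
    ∃ X Y : ℤ, (X ≠ 0 ∨ Y ≠ 0) ∧ |X| ≤ n.sqrt ∧ |Y| ≤ n.sqrt ∧ (X : ZMod n) = k * Y := by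
  have hcard : Fintype.card (ZMod n) < Fintype.card (Fin (n.sqrt + 1) × Fin (n.sqrt + 1)) := by
    simpa [ZMod.card, ← sq] using Nat.lt_succ_sqrt' n
  obtain ⟨a, b, hab, hfab⟩ := Fintype.exists_ne_map_eq_of_card_lt
    (fun q : Fin (n.sqrt + 1) × Fin (n.sqrt + 1) => (q.1 : ZMod n) - k * q.2) hcard
  have ha := a.1.isLt; have ha' := a.2.isLt; have hb := b.1.isLt; have hb' := b.2.isLt
  refine ⟨(a.1 : ℤ) - b.1, (a.2 : ℤ) - b.2, ?_, abs_le.mpr ⟨by omega, by omega⟩,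
    abs_le.mpr ⟨by omega, by omega⟩, ?_⟩
  · contrapose! hab
    exact Prod.ext (Fin.ext (by omega)) (Fin.ext (by omega))
  · push_cast
    linear_combination hfab

theorem Nat.Prime.sq_lt_of_abs_le_sqrt {p : ℕ} (hp : p.Prime) {X : ℤ} (hX : |X| ≤ p.sqrt) :
    X ^ 2 < p := by
  have hsq : p.sqrt ^ 2 < p := (Nat.sqrt_le' p).lt_of_ne fun h =>
    hp.prime.not_isSquare ⟨p.sqrt, h.symm.trans (sq _)⟩
  calc X ^ 2 = |X| ^ 2 := (sq_abs X).symm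
    _ ≤ (p.sqrt : ℤ) ^ 2 := pow_le_pow_left₀ (abs_nonneg X) hX 2
    _ < p := by exact_mod_cast hsq

theorem Int.sq_add_three_mul_sq_emod_three_ne_two (X Y : ℤ) : (X ^ 2 + 3 * Y ^ 2) % 3 ≠ 2 := by
  intro h
  have h3 : ((X ^ 2 + 3 * Y ^ 2 : ℤ) : ZMod 3) = 2 := by
    rw [← ZMod.intCast_mod, Nat.cast_ofNat, h]
    rfl
  push_cast at h3
  generalize (X : ZMod 3) = x, (Y : ZMod 3) = y at h3
  revert x y
  decide

theorem Int.exists_eq_sq_add_three_mul_sq_of_three_mul {n X Y : ℤ} (h : 3 * n = X ^ 2 + 3 * Y ^ 2) :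
    ∃ Z : ℤ, n = Y ^ 2 + 3 * Z ^ 2 := by
  obtain ⟨Z, rfl⟩ : (3 : ℤ) ∣ X := Int.prime_three.dvd_of_dvd_pow (n := 2) ⟨n - Y ^ 2, by linarith⟩
  exact ⟨Z, by linarith⟩

theorem Nat.Prime.exists_pos_of_eq_sq_add_three_mul_sq {p : ℕ} (hp : p.Prime) (h3 : p ≠ 3) {X Y : ℤ}
    (h : (p : ℤ) = X ^ 2 + 3 * Y ^ 2) : ∃ x y : ℕ, 0 < x ∧ 0 < y ∧ p = x ^ 2 + 3 * y ^ 2 := by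
  have hX : X ≠ 0 := by
    rintro rfl
    have : 3 ∣ p := by zify; exact ⟨Y ^ 2, by simpa using h⟩
    exact h3 ((Nat.prime_dvd_prime_iff_eq Nat.prime_three hp).mp this).symm
  have hY : Y ≠ 0 := by
    rintro rfl
    exact hp.prime.not_isSquare ⟨X.natAbs, by zify; simpa [← sq] using h⟩
  refine ⟨X.natAbs, Y.natAbs, Int.natAbs_pos.mpr hX, Int.natAbs_pos.mpr hY, ?_⟩
  zify
  simpa using h

theorem exists_rep_x_sq_add_three_y_sq (p : ℕ) (hp : p.Prime) (h : p % 3 = 1) :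
    ∃ x y : ℕ, 0 < x ∧ 0 < y ∧ p = x ^ 2 + 3 * y ^ 2 := by
  have := Fact.mk hp
  obtain ⟨k, hk⟩ := ZMod.exists_sq_eq_neg_three_of_mod_three_eq_one h
  obtain ⟨X, Y, hXY, hX, hY, hXkY⟩ := ZMod.exists_abs_le_sqrt_intCast_eq_mul p k
  obtain ⟨m, hm⟩ : (p : ℤ) ∣ X ^ 2 + 3 * Y ^ 2 := by
    rw [← ZMod.intCast_zmod_eq_zero_iff_dvd]
    push_cast
    linear_combination (X + k * Y) * hXkY + (Y : ZMod p) ^ 2 * hk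
  have hpos : 0 < X ^ 2 + 3 * Y ^ 2 := by rcases hXY with hne | hne <;> positivity
  have hX2 := hp.sq_lt_of_abs_le_sqrt hX
  have hY2 := hp.sq_lt_of_abs_le_sqrt hY
  obtain ⟨U, V, hUV⟩ : ∃ U V : ℤ, (p : ℤ) = U ^ 2 + 3 * V ^ 2 := by
    obtain rfl | rfl | rfl : m = 1 ∨ m = 2 ∨ m = 3 := by
      have : 0 < m := by nlinarith
      have : m < 4 := by nlinarith
      omega
    · exact ⟨X, Y, by linarith⟩
    · exact absurd (by omega) (Int.sq_add_three_mul_sq_emod_three_ne_two X Y)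
    · exact ⟨Y, Int.exists_eq_sq_add_three_mul_sq_of_three_mul (X := X) (by linarith)⟩
  exact hp.exists_pos_of_eq_sq_add_three_mul_sq (by omega) hUV
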